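/- Fix β>0 and θ∈ℝ. For every t>0, x≥0 and every real λ>−c̃^θ_t, one has e^{−x c^θ_t} + ∫_0^∞ e^{−λy} q^θ_t(x,y) dy = e^{−x u^θ(λ,t)} (all quantities finite). In particular, taking λ=0, e^{−x c^θ_t} + ∫_0^∞ q^θ_t(x,y) dy = 1, so that q^θ_t(x,dy) = e^{−x c^θ_t} δ_0(dy) + q^θ_t(x,y) dy is a probability measure on [0,∞). -/

import Mathlib

/-! Since `c̃ = c + 2θ`, one has `e^{-λy} q_t(x,y) = e^{-xc} · b e^{-ay} S(by)` with `a = c̃ + λ`,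
`b = x c c̃` and `S(z) = ∑ z^k / (k! (k+1)!)`. Integrating termwise, using
`∫_0^∞ y^k e^{-ay} dy = k! / a^{k+1}`, gives `∑_k (b/a)^{k+1} / (k+1)! = e^{b/a} - 1`, so the left
side is `e^{-xc + b/a} = e^{-x u(λ,t)}`. -/

open MeasureTheory Filter

/-- `c^θ_t` from the paper, with time-scale parameter `β`. -/
noncomputable def cc (β θ t : ℝ) : ℝ :=
  if θ = 0 then 1 / (β * t) else 2 * θ / (Real.exp (2 * β * θ * t) - 1)

/-- `c̃^θ_t` from the paper. -/
noncomputable def cct (β θ t : ℝ) : ℝ :=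
  if θ = 0 then 1 / (β * t) else 2 * θ / (1 - Real.exp (-(2 * β * θ * t)))

/-- `u^θ(λ, t)` from the paper. -/
noncomputable def uu (β θ l t : ℝ) : ℝ :=
  if t = 0 then l else l * cc β θ t / (cct β θ t + l)

/-- entrance density `q^θ_t(x)`. -/
noncomputable def qe (β θ t x : ℝ) : ℝ :=
  cc β θ t * cct β θ t * Real.exp (-(cct β θ t * x))

/-- transition density `q^θ_t(x, y)`. -/
noncomputable def qt (β θ t x y : ℝ) : ℝ :=
  x * cc β θ t * cct β θ t * Real.exp (-((x + y) * cc β θ t) - 2 * θ * y) *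
    ∑' k : ℕ, (x * y * cc β θ t * cct β θ t) ^ k /
      ((Nat.factorial k : ℝ) * (Nat.factorial (k + 1) : ℝ))

/-- the space-time harmonic function `m^{α,θ}(t, z)`. -/
noncomputable def mm (β θ α t z : ℝ) : ℝ :=
  z * Real.exp (-(α / cc β θ t)) *
    ∑' i : ℕ, (α * z) ^ i * Real.exp (((i : ℝ) + 1) * (2 * β * θ * t)) /
      ((Nat.factorial i : ℝ) * (Nat.factorial (i + 1) : ℝ))

/-- the space-time harmonic function `m̃^{α,θ}(t, z)`. -/
noncomputable def mmt (β θ α t z : ℝ) : ℝ :=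
  z * Real.exp (2 * θ * z) * Real.exp (-(α / cct β θ t)) *
    ∑' i : ℕ, (α * z) ^ i * Real.exp (-(((i : ℝ) + 1) * (2 * β * θ * t))) /
      ((Nat.factorial i : ℝ) * (Nat.factorial (i + 1) : ℝ))

open Set Real

namespace MeasureTheory

variable {α E : Type*} [MeasurableSpace α] {μ : Measure α} [NormedAddCommGroup E]

theorem integrable_tsum_of_summable_integral_norm {F : ℕ → α → E}
    (hF_int : ∀ i, Integrable (F i) μ) (hF_sum : Summable fun i ↦ ∫ a, ‖F i a‖ ∂μ)
    (hF_summable : ∀ᵐ a ∂μ, Summable fun i ↦ F i a) :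
    Integrable (fun a ↦ ∑' i, F i a) μ := by
  refine ⟨aestronglyMeasurable_of_tendsto_ae atTop
    (fun n ↦ Finset.aestronglyMeasurable_fun_sum _ fun i _ ↦ (hF_int i).1)
    (hF_summable.mono fun a h ↦ h.hasSum.tendsto_sum_nat), ?_⟩
  have h_lintegral : ∫⁻ a, ∑' i, ‖F i a‖ₑ ∂μ < ⊤ := by
    rw [lintegral_tsum fun i ↦ (hF_int i).1.enorm,
      ← tsum_congr fun i ↦ ofReal_integral_norm_eq_lintegral_enorm (hF_int i),
      ← ENNReal.ofReal_tsum_of_nonneg (fun i ↦ integral_nonneg fun _ ↦ norm_nonneg _) hF_sum]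
    exact ENNReal.ofReal_lt_top
  exact HasFiniteIntegral.mono'_enorm h_lintegral (ae_of_all _ fun a ↦ enorm_tsum_le_tsum_enorm)

end MeasureTheory

theorem integrableOn_pow_mul_exp_neg_mul_Ioi {a : ℝ} (ha : 0 < a) (k : ℕ) :
    IntegrableOn (fun y : ℝ ↦ y ^ k * exp (-(a * y))) (Ioi 0) := by
  have := integrableOn_rpow_mul_exp_neg_mul_rpow (s := k) (p := 1)
    (by linarith [(Nat.cast_nonneg k : (0 : ℝ) ≤ k)]) one_pos ha
  refine this.congr_fun (fun y _ ↦ ?_) measurableSet_Ioi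
  simp [rpow_natCast]

theorem integral_pow_mul_exp_neg_mul_Ioi {a : ℝ} (ha : 0 < a) (k : ℕ) :
    ∫ y in Ioi (0 : ℝ), y ^ k * exp (-(a * y)) = Nat.factorial k / a ^ (k + 1) := by
  have := integral_rpow_mul_exp_neg_mul_Ioi (a := k + 1) (by positivity) ha
  rw [add_sub_cancel_right, Gamma_nat_eq_factorial, ← Nat.cast_succ, rpow_natCast] at this
  simp only [rpow_natCast] at this
  rw [this, one_div, inv_pow, inv_mul_eq_div]

/-- `z ↦ I₁(2√z)/√z`, with `I₁` the modified Bessel function of the first kind. -/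
noncomputable def besselSeries (z : ℝ) : ℝ :=
  ∑' k : ℕ, z ^ k / ((Nat.factorial k : ℝ) * (Nat.factorial (k + 1) : ℝ))

theorem summable_besselSeries (z : ℝ) :
    Summable fun k : ℕ ↦ z ^ k / ((Nat.factorial k : ℝ) * (Nat.factorial (k + 1) : ℝ)) := by
  refine .of_norm_bounded (Real.summable_pow_div_factorial |z|) fun k ↦ ?_
  have hden : (0 : ℝ) ≤ Nat.factorial k * Nat.factorial (k + 1) := by positivity
  rw [norm_div, Real.norm_of_nonneg hden, norm_pow, Real.norm_eq_abs]
  gcongr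
  exact le_mul_of_one_le_right (by positivity) (Nat.one_le_cast.2 (Nat.factorial_pos _))

theorem besselSeries_nonneg {z : ℝ} (hz : 0 ≤ z) : 0 ≤ besselSeries z :=
  tsum_nonneg fun _ ↦ by positivity

section LaplaceBessel

variable {a b : ℝ}

theorem besselTerm_eq (a b y : ℝ) (k : ℕ) :
    b * exp (-(a * y)) * ((b * y) ^ k / ((Nat.factorial k : ℝ) * (Nat.factorial (k + 1) : ℝ)))
      = b ^ (k + 1) / ((Nat.factorial k : ℝ) * (Nat.factorial (k + 1) : ℝ)) *
        (y ^ k * exp (-(a * y))) := by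
  ring

theorem integrableOn_besselTerm (ha : 0 < a) (k : ℕ) :
    IntegrableOn (fun y ↦ b * exp (-(a * y)) *
      ((b * y) ^ k / ((Nat.factorial k : ℝ) * (Nat.factorial (k + 1) : ℝ)))) (Ioi 0) := by
  simp only [besselTerm_eq a b]
  exact (integrableOn_pow_mul_exp_neg_mul_Ioi ha k).const_mul _

theorem integral_besselTerm (ha : 0 < a) (k : ℕ) :
    ∫ y in Ioi (0 : ℝ), b * exp (-(a * y)) *
      ((b * y) ^ k / ((Nat.factorial k : ℝ) * (Nat.factorial (k + 1) : ℝ)))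
      = (b / a) ^ (k + 1) / (Nat.factorial (k + 1) : ℝ) := by
  simp only [besselTerm_eq a b]
  rw [integral_const_mul, integral_pow_mul_exp_neg_mul_Ioi ha k]
  have : (Nat.factorial k : ℝ) ≠ 0 := by positivity
  rw [div_pow]
  field_simp

theorem summable_integral_norm_besselTerm (ha : 0 < a) (hb : 0 ≤ b) :
    Summable fun k : ℕ ↦ ∫ y in Ioi (0 : ℝ), ‖b * exp (-(a * y)) *
      ((b * y) ^ k / ((Nat.factorial k : ℝ) * (Nat.factorial (k + 1) : ℝ)))‖ := by
  have h_norm (k : ℕ) : ∫ y in Ioi (0 : ℝ), ‖b * exp (-(a * y)) *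
      ((b * y) ^ k / ((Nat.factorial k : ℝ) * (Nat.factorial (k + 1) : ℝ)))‖
      = (b / a) ^ (k + 1) / (Nat.factorial (k + 1) : ℝ) := by
    rw [← integral_besselTerm ha k]
    refine setIntegral_congr_fun measurableSet_Ioi fun y (hy : 0 < y) ↦ ?_
    exact Real.norm_of_nonneg (by positivity)
  simp only [h_norm]
  exact (Real.summable_pow_div_factorial (b / a)).comp_injective Nat.succ_injective

theorem besselSeries_eq_tsum (a b y : ℝ) :
    b * exp (-(a * y)) * besselSeries (b * y) = ∑' k : ℕ, b * exp (-(a * y)) *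
      ((b * y) ^ k / ((Nat.factorial k : ℝ) * (Nat.factorial (k + 1) : ℝ))) :=
  tsum_mul_left.symm

theorem integrableOn_mul_exp_mul_besselSeries (ha : 0 < a) (hb : 0 ≤ b) :
    IntegrableOn (fun y ↦ b * exp (-(a * y)) * besselSeries (b * y)) (Ioi 0) := by
  simp only [besselSeries_eq_tsum a b]
  exact integrable_tsum_of_summable_integral_norm (integrableOn_besselTerm ha)
    (summable_integral_norm_besselTerm ha hb)
    (ae_of_all _ fun y ↦ (summable_besselSeries (b * y)).mul_left _)

theorem integral_mul_exp_mul_besselSeries (ha : 0 < a) (hb : 0 ≤ b) :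
    ∫ y in Ioi (0 : ℝ), b * exp (-(a * y)) * besselSeries (b * y) = exp (b / a) - 1 := by
  simp only [besselSeries_eq_tsum a b]
  rw [← integral_tsum_of_summable_integral_norm (integrableOn_besselTerm ha)
    (summable_integral_norm_besselTerm ha hb)]
  simp only [integral_besselTerm ha]
  have := (hasSum_nat_add_iff' 1).2 (NormedSpace.expSeries_div_hasSum_exp (b / a))
  simpa [← Real.exp_eq_exp_ℝ] using this.tsum_eq

end LaplaceBessel

theorem cct_eq_cc_mul_exp (β θ t : ℝ) : cct β θ t = cc β θ t * exp (2 * β * θ * t) := by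
  unfold cct cc
  split_ifs with hθ
  · simp [hθ]
  · have h_denom :
        1 - exp (-(2 * β * θ * t)) = (exp (2 * β * θ * t) - 1) / exp (2 * β * θ * t) := by
      rw [exp_neg]
      field_simp
    rw [h_denom, div_div_eq_mul_div]
    ring

theorem cc_pos {β θ t : ℝ} (hβ : 0 < β) (ht : 0 < t) : 0 < cc β θ t := by
  unfold cc
  split_ifs with hθ
  · positivity
  rcases lt_or_gt_of_ne hθ with hθ | hθ
  · have hs : 2 * β * θ * t < 0 :=
      mul_neg_of_neg_of_pos (mul_neg_of_pos_of_neg (by positivity) hθ) ht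
    exact div_pos_of_neg_of_neg (by linarith) (sub_neg.2 (exp_lt_one_iff.2 hs))
  · have hs : 0 < 2 * β * θ * t := by positivity
    exact div_pos (by linarith) (sub_pos.2 (one_lt_exp_iff.2 hs))

theorem cct_pos {β θ t : ℝ} (hβ : 0 < β) (ht : 0 < t) : 0 < cct β θ t := by
  rw [cct_eq_cc_mul_exp]
  exact mul_pos (cc_pos hβ ht) (exp_pos _)

theorem cct_eq_cc_add {β θ t : ℝ} (hβ : β ≠ 0) (ht : t ≠ 0) : cct β θ t = cc β θ t + 2 * θ := by
  rw [cct_eq_cc_mul_exp]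
  unfold cc
  split_ifs with hθ
  · simp [hθ]
  · have h_denom : exp (2 * β * θ * t) - 1 ≠ 0 := by
      rw [sub_ne_zero, Ne, exp_eq_one_iff]
      simp [hβ, hθ, ht]
    rw [div_add' _ _ _ h_denom, div_mul_eq_mul_div]
    ring

theorem exp_mul_qt {β θ t : ℝ} (hβ : β ≠ 0) (ht : t ≠ 0) (l x y : ℝ) :
    exp (-(l * y)) * qt β θ t x y = exp (-(x * cc β θ t)) *
      (x * cc β θ t * cct β θ t * exp (-((cct β θ t + l) * y)) *
        besselSeries (x * cc β θ t * cct β θ t * y)) := by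
  have h_exp : exp (-(l * y)) * exp (-((x + y) * cc β θ t) - 2 * θ * y)
      = exp (-(x * cc β θ t)) * exp (-((cct β θ t + l) * y)) := by
    rw [← exp_add, ← exp_add, cct_eq_cc_add hβ ht]
    congr 1
    ring
  rw [qt, show x * y * cc β θ t * cct β θ t = x * cc β θ t * cct β θ t * y by ring]
  unfold besselSeries
  linear_combination (x * cc β θ t * cct β θ t *
    ∑' k : ℕ, (x * cc β θ t * cct β θ t * y) ^ k /
      ((Nat.factorial k : ℝ) * (Nat.factorial (k + 1) : ℝ))) * h_exp

theorem qt_nonneg {β θ t x y : ℝ} (hβ : 0 < β) (ht : 0 < t) (hx : 0 ≤ x) (hy : 0 ≤ y) :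
    0 ≤ qt β θ t x y := by
  have hc := cc_pos (θ := θ) hβ ht
  have hd := cct_pos (θ := θ) hβ ht
  exact mul_nonneg (by positivity) (besselSeries_nonneg (by positivity))

section LaplaceTransition

variable {β θ t x l : ℝ}

theorem integrableOn_exp_mul_qt (hβ : 0 < β) (ht : 0 < t) (hx : 0 ≤ x)
    (hl : -cct β θ t < l) :
    IntegrableOn (fun y ↦ exp (-(l * y)) * qt β θ t x y) (Ioi 0) := by
  have hc := cc_pos (θ := θ) hβ ht
  have hd := cct_pos (θ := θ) hβ ht
  simp only [exp_mul_qt hβ.ne' ht.ne']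
  exact (integrableOn_mul_exp_mul_besselSeries (by linarith) (by positivity)).const_mul _

theorem exp_add_integral_exp_mul_qt (hβ : 0 < β) (ht : 0 < t) (hx : 0 ≤ x)
    (hl : -cct β θ t < l) :
    exp (-(x * cc β θ t)) + ∫ y in Ioi (0 : ℝ), exp (-(l * y)) * qt β θ t x y
      = exp (-(x * (l * cc β θ t / (cct β θ t + l)))) := by
  have hc := cc_pos (θ := θ) hβ ht
  have hd := cct_pos (θ := θ) hβ ht
  have ha : cct β θ t + l ≠ 0 := by linarith
  simp only [exp_mul_qt hβ.ne' ht.ne']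
  rw [integral_const_mul, integral_mul_exp_mul_besselSeries (by linarith) (by positivity),
    mul_sub, mul_one, add_sub_cancel, ← exp_add]
  congr 1
  field_simp
  ring

end LaplaceTransition

theorem isProbabilityMeasure_smul_dirac_add_withDensity {α : Type*} [MeasurableSpace α]
    {μ : Measure α} {s : Set α} {a : α} {p : ℝ} {f : α → ℝ} (hp : 0 ≤ p)
    (hf : IntegrableOn f s μ) (hf_nonneg : 0 ≤ᵐ[μ.restrict s] f) (h : p + ∫ y in s, f y ∂μ = 1) :
    IsProbabilityMeasure (ENNReal.ofReal p • Measure.dirac a +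
      (μ.restrict s).withDensity fun y ↦ ENNReal.ofReal (f y)) := by
  constructor
  simp only [Measure.add_apply, Measure.smul_apply, smul_eq_mul, measure_univ, mul_one,
    withDensity_apply _ MeasurableSet.univ, Measure.restrict_univ]
  rw [← ofReal_integral_eq_lintegral_ofReal hf hf_nonneg,
    ← ENNReal.ofReal_add hp (integral_nonneg_of_ae hf_nonneg), h, ENNReal.ofReal_one]

/-- Laplace transform of the transition kernel: for `t > 0`, `x ≥ 0` and `λ > -c̃^θ_t`,
`e^{-x c^θ_t} + ∫_0^∞ e^{-λy} q^θ_t(x,y) dy = e^{-x u^θ(λ,t)}` (with the integral finite);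
in particular, taking `λ = 0`, `e^{-x c^θ_t} + ∫_0^∞ q^θ_t(x,y) dy = 1`, so that
`q^θ_t(x, dy) = e^{-x c^θ_t} δ_0(dy) + q^θ_t(x,y) dy` is a probability measure on `[0, ∞)`. -/
theorem transition_laplace (β θ : ℝ) (hβ : 0 < β) (t : ℝ) (ht : 0 < t)
    (x : ℝ) (hx : 0 ≤ x) (l : ℝ) (hl : -cct β θ t < l) :
    MeasureTheory.IntegrableOn (fun y => Real.exp (-(l * y)) * qt β θ t x y)
      (Set.Ioi 0) MeasureTheory.volume ∧
    Real.exp (-(x * cc β θ t)) + (∫ y in Set.Ioi (0 : ℝ), Real.exp (-(l * y)) * qt β θ t x y)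
      = Real.exp (-(x * uu β θ l t)) ∧
    Real.exp (-(x * cc β θ t)) + (∫ y in Set.Ioi (0 : ℝ), qt β θ t x y) = 1 ∧
    MeasureTheory.IsProbabilityMeasure
      ((ENNReal.ofReal (Real.exp (-(x * cc β θ t)))) • MeasureTheory.Measure.dirac (0 : ℝ) +
        (MeasureTheory.volume.restrict (Set.Ioi (0 : ℝ))).withDensity
          (fun y => ENNReal.ofReal (qt β θ t x y))) := by
  have h0 : -cct β θ t < 0 := neg_neg_of_pos (cct_pos hβ ht)
  have hq_int : IntegrableOn (qt β θ t x) (Ioi 0) := by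
    simpa using integrableOn_exp_mul_qt hβ ht hx h0
  have hq_mass : exp (-(x * cc β θ t)) + ∫ y in Ioi (0 : ℝ), qt β θ t x y = 1 := by
    simpa using exp_add_integral_exp_mul_qt hβ ht hx h0
  have hq_nonneg : 0 ≤ᵐ[volume.restrict (Ioi 0)] qt β θ t x :=
    (ae_restrict_iff' measurableSet_Ioi).2 (ae_of_all _ fun y hy ↦ qt_nonneg hβ ht hx hy.le)
  refine ⟨integrableOn_exp_mul_qt hβ ht hx hl, ?_, hq_mass, ?_⟩
  · rw [uu, if_neg ht.ne']
    exact exp_add_integral_exp_mul_qt hβ ht hx hl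
  · exact isProbabilityMeasure_smul_dirac_add_withDensity (exp_pos _).le hq_int hq_nonneg hq_mass
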